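/- There exists an absolutely continuous probability measure on ℝ that is not a countable mixture of uniform distributions on dyadic intervals. Specifically, there is an open dense subset A of (0,1) with 0 < Leb(A) < 1, and the uniform distribution on [0,1]∖A is not in Mix{unif(k2^m,(k+1)2^m) : k,m∈ℤ}, since its support contains no interval of positive length. -/

import Mathlib

open MeasureTheory Set
open scoped ENNReal

/-- The uniform distribution on the interval (a,b). -/
noncomputable def unif (a b : ℝ) : Measure ℝ :=
  (ENNReal.ofReal (b - a))⁻¹ • volume.restrict (Set.Ioo a b)

/-- The uniform distribution on the dyadic interval (k·2^m, (k+1)·2^m). -/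
noncomputable def dyadicUnif (k m : ℤ) : Measure ℝ :=
  unif ((k : ℝ) * 2 ^ m) (((k : ℝ) + 1) * 2 ^ m)

/-- μ is a countable mixture of uniform distributions on dyadic intervals. -/
def InMixDyadic (μ : Measure ℝ) : Prop :=
  ∃ p : ℤ × ℤ → ℝ≥0∞, (∑' km, p km) = 1 ∧
    μ = Measure.sum (fun km : ℤ × ℤ => p km • dyadicUnif km.1 km.2)

/-!
A dyadic mixture with a nonzero weight dominates a multiple of Lebesgue measure on some
interval, hence charges every nonempty open subset of that interval. The uniform distribution
on `K = [0,1] \ A`, with `A` open and dense in `(0,1)`, is carried by the closed set `K`, which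
has empty interior; so it gives no mass to the open set `Kᶜ`, which meets every interval.
Such an `A` of small measure is obtained by fattening the rationals with balls of summable radii.
-/

open ProbabilityTheory

theorem exists_isOpen_dense_subset_volume_lt {U : Set ℝ} (hU : IsOpen U) (hne : U.Nonempty)
    {ε : ℝ≥0∞} (hε : ε ≠ 0) :
    ∃ A : Set ℝ, IsOpen A ∧ A ⊆ U ∧ U ⊆ closure A ∧ 0 < volume A ∧ volume A < ε := by
  obtain ⟨δ, hδpos, hδsum⟩ := ENNReal.exists_pos_sum_of_countable hε ℚ
  set A : Set ℝ := ⋃ q : ℚ, Metric.ball (q : ℝ) (δ q / 2) ∩ U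
  have hAopen : IsOpen A := isOpen_iUnion fun q => Metric.isOpen_ball.inter hU
  have hdense : U ⊆ closure A := by
    refine (Rat.denseRange_cast.open_subset_closure_inter hU).trans (closure_mono ?_)
    rintro _ ⟨hxU, q, rfl⟩
    exact mem_iUnion.2 ⟨q, Metric.mem_ball_self (by simpa using hδpos q), hxU⟩
  have hAne : A.Nonempty := by
    by_contra h
    rw [not_nonempty_iff_eq_empty.1 h, closure_empty, subset_empty_iff] at hdense
    exact hne.ne_empty hdense
  refine ⟨A, hAopen, iUnion_subset fun q => inter_subset_right, hdense,
    hAopen.measure_pos volume hAne, lt_of_le_of_lt ?_ hδsum⟩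
  calc volume A ≤ ∑' q : ℚ, volume (Metric.ball (q : ℝ) (δ q / 2) ∩ U) := measure_iUnion_le _
    _ ≤ ∑' q : ℚ, volume (Metric.ball (q : ℝ) (δ q / 2)) :=
        ENNReal.tsum_le_tsum fun q => measure_mono inter_subset_left
    _ = ∑' q : ℚ, (δ q : ℝ≥0∞) := by
        congr 1 with q
        rw [Real.volume_ball, mul_div_cancel₀ _ two_ne_zero, ENNReal.ofReal_coe_nnreal]

theorem interior_diff_eq_empty_of_interior_subset_closure {X : Type*} [TopologicalSpace X]
    {s t : Set X} (h : interior s ⊆ closure t) : interior (s \ t) = ∅ := by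
  have hdisj : Disjoint (interior (s \ t)) (closure t) :=
    (disjoint_sdiff_left.mono_left interior_subset).closure_right isOpen_interior
  exact hdisj.eq_bot_of_le ((interior_mono sdiff_subset).trans h)

theorem measure_compl_ne_zero_of_restrict_Ioo_absolutelyContinuous {μ : Measure ℝ} {a b : ℝ}
    (hab : a < b) (hμ : volume.restrict (Ioo a b) ≪ μ) {K : Set ℝ} (hK : IsClosed K)
    (hKint : interior K = ∅) : μ Kᶜ ≠ 0 := by
  intro hμK
  have hne : (Kᶜ ∩ Ioo a b).Nonempty := by
    rw [nonempty_iff_ne_empty, Ne, ← disjoint_iff_inter_eq_empty, disjoint_compl_left_iff_subset]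
    intro hsub
    have := interior_maximal hsub isOpen_Ioo
    rw [hKint, subset_empty_iff] at this
    exact (nonempty_Ioo.2 hab).ne_empty this
  refine (hK.isOpen_compl.inter isOpen_Ioo).measure_ne_zero volume hne ?_
  rw [← Measure.restrict_apply' measurableSet_Ioo]
  exact hμ hμK

theorem restrict_Ioo_absolutelyContinuous_unif (a b : ℝ) : volume.restrict (Ioo a b) ≪ unif a b :=
  Measure.absolutelyContinuous_smul (ENNReal.inv_ne_zero.2 ENNReal.ofReal_ne_top)

theorem InMixDyadic.exists_restrict_Ioo_absolutelyContinuous {μ : Measure ℝ}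
    (h : InMixDyadic μ) : ∃ a b : ℝ, a < b ∧ volume.restrict (Ioo a b) ≪ μ := by
  obtain ⟨p, hp, rfl⟩ := h
  obtain ⟨⟨k, m⟩, hkm⟩ : ∃ km, p km ≠ 0 := by
    by_contra! h0
    rw [ENNReal.tsum_eq_zero.2 h0] at hp
    exact zero_ne_one hp
  exact ⟨k * 2 ^ m, (k + 1) * 2 ^ m,
    mul_lt_mul_of_pos_right (lt_add_one _) (zpow_pos two_pos m),
    (restrict_Ioo_absolutelyContinuous_unif _ _).trans <|
      (Measure.absolutelyContinuous_smul hkm).trans (Measure.le_sum _ (k, m)).absolutelyContinuous⟩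

/-- There is an absolutely continuous probability measure on ℝ — the uniform
distribution on the complement in [0,1] of a dense open set A of Lebesgue measure
strictly between 0 and 1 — that is not a countable mixture of uniform distributions
on dyadic intervals. -/
theorem exists_ac_probability_not_dyadic_mixture :
    ∃ (A : Set ℝ) (μ : Measure ℝ),
      IsOpen A ∧ A ⊆ Set.Ioo 0 1 ∧ Set.Ioo (0:ℝ) 1 ⊆ closure A ∧
      0 < volume A ∧ volume A < 1 ∧
      μ = (volume (Set.Icc (0:ℝ) 1 \ A))⁻¹ • volume.restrict (Set.Icc (0:ℝ) 1 \ A) ∧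
      IsProbabilityMeasure μ ∧ μ ≪ volume ∧ ¬ InMixDyadic μ := by
  obtain ⟨A, hAopen, hAsub, hAdense, hApos, hAlt⟩ :=
    exists_isOpen_dense_subset_volume_lt isOpen_Ioo (nonempty_Ioo.2 zero_lt_one) one_ne_zero
  set K := Icc (0:ℝ) 1 \ A
  have hKclosed : IsClosed K := isClosed_Icc.sdiff hAopen
  have hK0 : volume K ≠ 0 := by
    refine (lt_of_lt_of_le ?_ (le_measure_sdiff (μ := volume))).ne'
    rwa [Real.volume_Icc, sub_zero, ENNReal.ofReal_one, tsub_pos_iff_lt]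
  have hKtop : volume K ≠ ∞ :=
    ne_top_of_le_ne_top (by simp) (measure_mono (μ := volume) sdiff_subset)
  have hKint : interior K = ∅ :=
    interior_diff_eq_empty_of_interior_subset_closure (by rwa [interior_Icc])
  refine ⟨A, volume[|K], hAopen, hAsub, hAdense, hApos, hAlt, rfl,
    cond_isProbabilityMeasure_of_finite hK0 hKtop, cond_absolutelyContinuous, fun hmix => ?_⟩
  obtain ⟨a, b, hab, hac⟩ := hmix.exists_restrict_Ioo_absolutelyContinuous
  refine measure_compl_ne_zero_of_restrict_Ioo_absolutelyContinuous hab hac hKclosed hKint ?_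
  rw [cond_apply hKclosed.measurableSet, inter_compl_self, measure_empty, mul_zero]
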